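/- arXiv:2503.04487 — 2 statements merged into one kernel-verified Lean document; each statement's English description precedes it below -/
import Mathlib

section
/- Let μ : A* → A* be a substitution, k ≥ 0 an integer, m ∈ A* and a ∈ A such that m is a proper prefix of μ^k(a). Then there exists a unique a-admissible sequence ((m_i, a_i))_{i=0,...,k-1} such that m = μ^{k-1}(m_{k-1})·μ^{k-2}(m_{k-2})···μ^0(m_0). -/
/-! Since `μ^(k+1)(a) = μ^k(μ(a))` is the concatenation of the blocks `μ^k(c)` over the letters `c`
of `μ(a)`, a proper prefix `m` of it ends strictly inside exactly one block: `m = μ^k(p) · r` with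
`p b` a prefix of `μ(a)` and `r` a proper prefix of `μ^k(b)`, and the cut `(p, b, r)` is unique.
Recursing on `r` produces the admissible sequence, whose last pair is `(p, b)`. -/

/-- `substApp μ n w` is `μ^n(w)`: the `n`-fold application of the substitution `μ`
(extended to words by concatenation) to the word `w`. -/
def substApp {A : Type*} (μ : A → List A) (n : ℕ) (w : List A) : List A :=
  (fun v => v.flatMap μ)^[n] w

/-- A sequence `((m_i, a_i))_{i=0,...,k-1}` is admissible with respect to `μ` if
`m_{i-1} a_{i-1}` is a prefix of `μ(a_i)` for every `1 ≤ i ≤ k-1`. -/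
def Admissible {A : Type*} (μ : A → List A) (k : ℕ) (s : Fin k → List A × A) : Prop :=
  ∀ i : Fin k, 0 < i.val →
    ((s ⟨i.val - 1, by have := i.isLt; omega⟩).1 ++
      [(s ⟨i.val - 1, by have := i.isLt; omega⟩).2]) <+: μ (s i).2

/-- A sequence `((m_i, a_i))_{i=0,...,k-1}` is `a`-admissible with respect to `μ`
if it is admissible and moreover `m_{k-1} a_{k-1}` is a prefix of `μ(a)`. -/
def LetterAdmissible {A : Type*} (μ : A → List A) (a : A) (k : ℕ)
    (s : Fin k → List A × A) : Prop :=
  Admissible μ k s ∧ ∀ h : 0 < k,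
    ((s ⟨k - 1, by omega⟩).1 ++ [(s ⟨k - 1, by omega⟩).2]) <+: μ a

/-- The word `μ^{k-1}(m_{k-1}) · μ^{k-2}(m_{k-2}) ⋯ μ^0(m_0)` associated with a
sequence `((m_i, a_i))_{i=0,...,k-1}`. -/
def dtProd {A : Type*} (μ : A → List A) (k : ℕ) (s : Fin k → List A × A) : List A :=
  ((List.ofFn fun i : Fin k => substApp μ i.val (s i).1)).reverse.flatten

def List.IsProperPrefix {α : Type*} (u v : List α) : Prop := u <+: v ∧ u ≠ v

namespace List.IsProperPrefix

variable {α : Type*} {u v : List α}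

theorem length_lt (h : u.IsProperPrefix v) : u.length < v.length :=
  lt_of_le_of_ne h.1.length_le fun hl => h.2 (h.1.eq_of_length hl)

theorem eq_nil_of_singleton {a : α} (h : u.IsProperPrefix [a]) : u = [] :=
  List.eq_nil_of_length_eq_zero (by simpa using h.length_lt)

end List.IsProperPrefix

open List

section FlatMap

variable {A B : Type*} (φ : A → List B)

theorem isProperPrefix_flatMap_append {w p : List A} {b : A} {r : List B}
    (hpb : p ++ [b] <+: w) (hr : r.IsProperPrefix (φ b)) :
    (p.flatMap φ ++ r).IsProperPrefix (w.flatMap φ) := by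
  have hw : (p ++ [b]).flatMap φ <+: w.flatMap φ := hpb.flatMap φ
  rw [flatMap_append, flatMap_singleton] at hw
  refine ⟨((prefix_append_right_inj _).2 hr.1).trans hw, fun h => ?_⟩
  have hrlen := hr.length_lt
  have hwlen := congrArg length h ▸ hw.length_le
  simp only [length_append] at hwlen
  omega

theorem exists_eq_flatMap_append_of_isProperPrefix_flatMap {w : List A} {m : List B}
    (hm : m.IsProperPrefix (w.flatMap φ)) :
    ∃ p b r, p ++ [b] <+: w ∧ r.IsProperPrefix (φ b) ∧ m = p.flatMap φ ++ r := by
  induction w generalizing m with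
  | nil => exact absurd (prefix_nil.1 hm.1) hm.2
  | cons c w ih =>
    rw [flatMap_cons] at hm
    by_cases hc : φ c <+: m
    · obtain ⟨m', rfl⟩ := hc
      obtain ⟨p, b, r, hpb, hr, rfl⟩ :=
        ih ⟨(prefix_append_right_inj _).1 hm.1, fun h => hm.2 (by rw [h])⟩
      exact ⟨c :: p, b, r, cons_prefix_cons.2 ⟨rfl, hpb⟩, hr, by simp⟩
    · have hmc : m <+: φ c :=
        (prefix_or_prefix_of_prefix hm.1 (prefix_append _ _)).resolve_right hc
      exact ⟨[], c, m, by simp, ⟨hmc, fun h => hc (h ▸ prefix_rfl)⟩, by simp⟩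

theorem eq_of_flatMap_append_eq {w p₁ p₂ : List A} {b₁ b₂ : A} {r₁ r₂ : List B}
    (h₁ : p₁ ++ [b₁] <+: w) (h₂ : p₂ ++ [b₂] <+: w)
    (hr₁ : r₁.IsProperPrefix (φ b₁)) (hr₂ : r₂.IsProperPrefix (φ b₂))
    (h : p₁.flatMap φ ++ r₁ = p₂.flatMap φ ++ r₂) : p₁ = p₂ ∧ b₁ = b₂ ∧ r₁ = r₂ := by
  wlog hle : p₁.length ≤ p₂.length generalizing p₁ p₂ b₁ b₂ r₁ r₂
  · obtain ⟨hp, hb, hr⟩ := this h₂ h₁ hr₂ hr₁ h.symm (by omega)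
    exact ⟨hp.symm, hb.symm, hr.symm⟩
  obtain hlt | hlen := hle.lt_or_eq
  · have hpb : p₁ ++ [b₁] <+: p₂ :=
      prefix_of_prefix_length_le h₁ ((prefix_append _ _).trans h₂) (by simpa using hlt)
    have hlt' := (isProperPrefix_flatMap_append φ hpb hr₁).length_lt
    have hlen' := congrArg length h
    simp only [length_append] at hlt' hlen'
    omega
  · have hpb : p₁ ++ [b₁] = p₂ ++ [b₂] :=
      (prefix_of_prefix_length_le h₁ h₂ (by simpa using hle)).eq_of_length (by simpa using hlen)
    obtain ⟨rfl, hb⟩ := append_inj hpb hlen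
    exact ⟨rfl, by simpa using hb, append_cancel_left h⟩

end FlatMap

section Substitution

variable {A : Type*} (μ : A → List A)

theorem substApp_succ (n : ℕ) (w : List A) :
    substApp μ (n + 1) w = substApp μ n (w.flatMap μ) :=
  Function.iterate_succ_apply _ n w

theorem substApp_succ_singleton (n : ℕ) (a : A) :
    substApp μ (n + 1) [a] = substApp μ n (μ a) := by
  rw [substApp_succ, flatMap_singleton]

theorem substApp_eq_flatMap (n : ℕ) (w : List A) :
    substApp μ n w = w.flatMap fun b => substApp μ n [b] := by
  induction n generalizing w with
  | zero => simp [substApp]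
  | succ n ih =>
    simp only [substApp_succ_singleton]
    rw [substApp_succ, ih, flatMap_assoc]
    simp only [← ih]

theorem dtProd_succ (k : ℕ) (s : Fin (k + 1) → List A × A) :
    dtProd μ (k + 1) s = substApp μ k (s (Fin.last k)).1 ++ dtProd μ k (Fin.init s) := by
  rw [dtProd, ofFn_succ']
  simp [dtProd, Fin.init]

theorem letterAdmissible_zero (a : A) (s : Fin 0 → List A × A) : LetterAdmissible μ a 0 s :=
  ⟨fun i => i.elim0, fun h => absurd h (lt_irrefl 0)⟩

theorem letterAdmissible_succ_iff {k : ℕ} {a : A} {s : Fin (k + 1) → List A × A} :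
    LetterAdmissible μ a (k + 1) s ↔
      LetterAdmissible μ (s (Fin.last k)).2 k (Fin.init s) ∧
        (s (Fin.last k)).1 ++ [(s (Fin.last k)).2] <+: μ a := by
  constructor
  · rintro ⟨hadm, hlast⟩
    exact ⟨⟨fun i hi => hadm i.castSucc hi, fun hk => hadm (Fin.last k) hk⟩, hlast k.succ_pos⟩
  · rintro ⟨⟨hadm, hlast⟩, ha⟩
    refine ⟨fun i hi => ?_, fun _ => ha⟩
    cases i using Fin.lastCases with
    | last => exact hlast hi
    | cast i => exact hadm i hi

theorem LetterAdmissible.isProperPrefix_dtProd :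
    ∀ {k : ℕ} {a : A} {s : Fin k → List A × A}, LetterAdmissible μ a k s →
      (dtProd μ k s).IsProperPrefix (substApp μ k [a])
  | 0, a, s, _ => ⟨by simp [dtProd], by simp [dtProd, substApp]⟩
  | k + 1, a, s, hs => by
    rw [letterAdmissible_succ_iff] at hs
    rw [dtProd_succ, substApp_succ_singleton, substApp_eq_flatMap μ k (μ a),
      substApp_eq_flatMap μ k (s _).1]
    exact isProperPrefix_flatMap_append _ hs.2 (isProperPrefix_dtProd hs.1)

theorem exists_letterAdmissible_eq_dtProd :
    ∀ {k : ℕ} {a : A} {m : List A}, m.IsProperPrefix (substApp μ k [a]) →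
      ∃ s, LetterAdmissible μ a k s ∧ m = dtProd μ k s
  | 0, a, m, hm => ⟨finZeroElim, letterAdmissible_zero μ a _,
      by simpa [dtProd] using hm.eq_nil_of_singleton⟩
  | k + 1, a, m, hm => by
    rw [substApp_succ_singleton, substApp_eq_flatMap] at hm
    obtain ⟨p, b, r, hpb, hr, rfl⟩ := exists_eq_flatMap_append_of_isProperPrefix_flatMap _ hm
    obtain ⟨s, hs, rfl⟩ := exists_letterAdmissible_eq_dtProd hr
    refine ⟨Fin.snoc s (p, b), letterAdmissible_succ_iff μ |>.2 ?_, ?_⟩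
    · simpa [Fin.init_snoc] using ⟨hs, hpb⟩
    · rw [dtProd_succ, Fin.init_snoc, Fin.snoc_last, substApp_eq_flatMap μ k p]

theorem LetterAdmissible.eq_of_dtProd_eq :
    ∀ {k : ℕ} {a : A} {s t : Fin k → List A × A}, LetterAdmissible μ a k s →
      LetterAdmissible μ a k t → dtProd μ k s = dtProd μ k t → s = t
  | 0, _, _, _, _, _, _ => funext finZeroElim
  | k + 1, a, s, t, hs, ht, h => by
    rw [letterAdmissible_succ_iff] at hs ht
    rw [dtProd_succ, dtProd_succ, substApp_eq_flatMap μ k (s _).1,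
      substApp_eq_flatMap μ k (t _).1] at h
    obtain ⟨hm, hb, hinit⟩ := eq_of_flatMap_append_eq _ hs.2 ht.2
      (hs.1.isProperPrefix_dtProd μ) (ht.1.isProperPrefix_dtProd μ) h
    rw [← Fin.snoc_init_self s, ← Fin.snoc_init_self t, Prod.ext hm hb,
      eq_of_dtProd_eq hs.1 (hb ▸ ht.1) hinit]

end Substitution

theorem stmt5_general {A : Type*} (μ : A → List A) (k : ℕ)
    (m : List A) (a : A) (hpref : m <+: substApp μ k [a]) (hproper : m ≠ substApp μ k [a]) :
    ∃! s : Fin k → List A × A, LetterAdmissible μ a k s ∧ m = dtProd μ k s := by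
  obtain ⟨s, hs, rfl⟩ := exists_letterAdmissible_eq_dtProd μ ⟨hpref, hproper⟩
  exact ⟨s, ⟨hs, rfl⟩, fun t ⟨ht, h⟩ => ht.eq_of_dtProd_eq μ hs h.symm⟩

/-- Lemma 2.11: if `m` is a proper prefix of `μ^k(a)`, then there is a unique
`a`-admissible sequence `((m_i, a_i))_{i=0,...,k-1}` with
`m = μ^{k-1}(m_{k-1}) ⋯ μ^0(m_0)`. -/
theorem stmt5 {A : Type*} (μ : A → List A) (hne : ∀ c, μ c ≠ []) (k : ℕ)
    (m : List A) (a : A) (hpref : m <+: substApp μ k [a]) (hproper : m ≠ substApp μ k [a]) :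
    ∃! s : Fin k → List A × A, LetterAdmissible μ a k s ∧ m = dtProd μ k s :=
  stmt5_general μ k m a hpref hproper
end

section
/- Let μ : A* → A* be a substitution, u a two-sided periodic point of μ with growing seed b|a and period p, and r ∈ {0,...,p-1}. Fix j ∈ {0,...,p-1} and a letter c ∈ E_j. If there exists a b-admissible sequence ((m_i,a_i))_{i=0,...,k-1} with k ≡ j (mod p), c the last letter of m_0, and μ^{k-1}(m_{k-1})···μ^0(m_0)·a_0 ≠ μ^k(b), then there exists such a b-admissible sequence additionally satisfying either k < p or μ^{p-1}(m_{k-1})···μ^0(m_{k-p})·a_{k-p} ≠ μ^p(b). -/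
section

variable {A : Type*} (μ : A → List A)

theorem substApp_append (n : ℕ) (w₁ w₂ : List A) :
    substApp μ n (w₁ ++ w₂) = substApp μ n w₁ ++ substApp μ n w₂ := by
  induction n generalizing w₁ w₂ with
  | zero => rfl
  | succ n ih =>
    simp only [substApp, Function.iterate_succ_apply, List.flatMap_append] at *
    exact ih _ _

theorem substApp_flatten (n : ℕ) (L : List (List A)) :
    substApp μ n L.flatten = (L.map (substApp μ n)).flatten := by
  induction L with
  | nil => exact Function.iterate_fixed rfl n
  | cons w L ih => simp [substApp_append, ih]

theorem substApp_add (m n : ℕ) (w : List A) :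
    substApp μ (m + n) w = substApp μ m (substApp μ n w) :=
  Function.iterate_add_apply _ m n w

theorem List.reverse_ofFn {α : Type*} {n : ℕ} (f : Fin n → α) :
    (List.ofFn f).reverse = List.ofFn (fun i => f i.rev) := by
  refine List.ext_getElem (by simp) fun i h _ => ?_
  simp only [List.getElem_reverse, List.getElem_ofFn]
  congr 1
  ext
  simp only [List.length_reverse, List.length_ofFn] at h
  simp only [List.length_ofFn, Fin.rev]
  omega

/-- `μ^{q-1}(m_{n+q-1}) ⋯ μ^0(m_n)`: the factor of `dtProd μ (n + q) s` contributed by its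
top `q` terms, before the remaining substitution `μ^n` is applied. -/
def dtBlock (n q : ℕ) (s : Fin (n + q) → List A × A) : List A :=
  (List.ofFn fun t : Fin q =>
    substApp μ (q - 1 - t.val) (s ⟨n + q - 1 - t.val, by omega⟩).1).flatten

theorem dtProd_add (n q : ℕ) (s : Fin (n + q) → List A × A) :
    dtProd μ (n + q) s =
      substApp μ n (dtBlock μ n q s) ++ dtProd μ n (s ∘ Fin.castAdd q) := by
  unfold dtProd dtBlock
  rw [List.ofFn_add, List.reverse_append, List.flatten_append, substApp_flatten,
    List.map_ofFn, List.reverse_ofFn]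
  congr 3
  funext t
  have hidx : Fin.natAdd n t.rev = ⟨n + q - 1 - t.val, by omega⟩ := by
    ext
    simp only [Fin.rev, Fin.natAdd_mk]
    omega
  simp only [Function.comp, hidx, ← substApp_add]
  congr 1
  omega

theorem Admissible.letterAdmissible_castAdd {n q : ℕ} {s : Fin (n + q) → List A × A}
    (hs : Admissible μ (n + q) s) (hq : 0 < q) :
    LetterAdmissible μ (s ⟨n, by omega⟩).2 n (s ∘ Fin.castAdd q) :=
  ⟨fun i hi => hs (Fin.castAdd q i) hi, fun hn => hs ⟨n, by omega⟩ hn⟩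

theorem dtProd_append_eq_of_dtBlock_eq {n q : ℕ} {s : Fin (n + q) → List A × A} {b x : A}
    (hblock : dtBlock μ n q s ++ [b] = substApp μ q [b])
    (hrest : dtProd μ n (s ∘ Fin.castAdd q) ++ [x] = substApp μ n [b]) :
    dtProd μ (n + q) s ++ [x] = substApp μ (n + q) [b] := by
  rw [dtProd_add, List.append_assoc, hrest, ← substApp_append, hblock, substApp_add]

end

theorem stmt11 {A : Type*} (μ : A → List A)
    (b : A) (p : ℕ) (hp : 1 ≤ p)
    (hseedb : [b] <:+ substApp μ p [b])
    (j : ℕ) (c : A)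
    (k : ℕ) (s : Fin k → List A × A)
    (hk1 : 1 ≤ k) (hkj : k % p = j % p)
    (hadm : LetterAdmissible μ b k s)
    (hlast : (s ⟨0, hk1⟩).1.getLast? = some c)
    (hneq : dtProd μ k s ++ [(s ⟨0, hk1⟩).2] ≠ substApp μ k [b]) :
    ∃ (k' : ℕ) (s' : Fin k' → List A × A) (hk1' : 1 ≤ k'),
      k' % p = j % p ∧ LetterAdmissible μ b k' s' ∧
      (s' ⟨0, hk1'⟩).1.getLast? = some c ∧
      dtProd μ k' s' ++ [(s' ⟨0, hk1'⟩).2] ≠ substApp μ k' [b] ∧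
      (k' < p ∨ ∀ h : p ≤ k',
        (List.ofFn (fun t : Fin p =>
            substApp μ (p - 1 - t.val)
              (s' ⟨k' - 1 - t.val, by have := t.isLt; omega⟩).1)).flatten
          ++ [(s' ⟨k' - p, by omega⟩).2] ≠ substApp μ p [b]) := by
  induction k using Nat.strong_induction_on with
  | _ k IH =>
  by_cases hkp : k < p
  · exact ⟨k, s, hk1, hkj, hadm, hlast, hneq, Or.inl hkp⟩
  obtain ⟨n, rfl⟩ : ∃ n, k = n + p := ⟨k - p, by omega⟩
  by_cases hblock : dtBlock μ n p s ++ [(s ⟨n, by omega⟩).2] = substApp μ p [b]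
  swap
  · refine ⟨n + p, s, hk1, hkj, hadm, hlast, hneq, Or.inr fun _ => ?_⟩
    simp only [Nat.add_sub_cancel]
    exact hblock
  have han : (s ⟨n, by omega⟩).2 = b := by
    obtain ⟨w, hw⟩ := hseedb
    simpa [← hw] using congrArg List.getLast? hblock
  rw [han] at hblock
  rcases Nat.eq_zero_or_pos n with rfl | hn
  · refine absurd (dtProd_append_eq_of_dtBlock_eq μ hblock ?_) hneq
    simp [dtProd, substApp, ← han]
  have hadm' := hadm.1.letterAdmissible_castAdd μ (by omega : 0 < p)
  rw [han] at hadm'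
  exact IH n (by omega) (s ∘ Fin.castAdd p) hn (by simpa using hkj) hadm' hlast
    fun hrest => hneq (dtProd_append_eq_of_dtBlock_eq μ hblock hrest)
end
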